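/- Let α ∈ ℝ and let u, w : ℝ → ℝ be differentiable functions satisfying u'(s) = 2u(s)w(s) + 2α and w'(s) = -(w(s)² - 2u(s) - s) for all s ∈ ℝ, with Hamiltonian H(s) = -u(s)² + (w(s)² - s)·u(s) + 2α·w(s). Assume that as s → +∞: w(s) + √s + (α + 1/4)/s = O(s^{-5/2}), H(s) + 2α√s + α²/s = O(s^{-5/2}), u(s)w'(s) + H(s) + 2α√s + α(2α+1)/(2s) = O(s^{-5/2}), and u(s)w(s) + 2sH(s) + 4α·s^{3/2} → -α - 2α². Fix c > 0 large enough that these bounds hold on [c, ∞), and define Ĩ₁(s) := ∫_{c}^{+∞} ( w(τ) + √τ + (α + 1/4)/τ ) dτ + ∫_{s}^{c} w dτ + (2/3)c^{3/2} + (α + 1/4)ln c, I₂(s) := ∫_{c}^{+∞} ( H(τ) + 2α√τ + α²/τ ) dτ + ∫_{s}^{c} H dτ + (4/3)α c^{3/2} + α² ln c, and I₃(s) := ∫_{c}^{+∞} ( u(τ)w'(τ) + H(τ) + 2α√τ + α(2α+1)/(2τ) ) dτ + ∫_{s}^{c} ( u w' + H ) dτ + (4/3)α c^{3/2} + α(α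 + 1/2)ln c. Then all three integrals converge and, for every s ∈ ℝ, I₂(s) = -(1/3)·( u(s)w(s) + 2s·H(s) + 2α² + α ) + 2α·Ĩ₁(s) - I₃(s). -/

import Mathlib

/-!
Along the Painlevé II flow `H' = -u`, hence `(u w + 2 s H)' = 3 u w' + 6 H - 6 α w`, so the
combination `I₂ - 2α Ĩ₁ + I₃` integrates an exact derivative. On `[s, c]` this is the
fundamental theorem of calculus; on `[c, ∞)` the `1/τ` parts of the three tails cancel and their
`√τ` parts integrate to `(4/3) α τ^{3/2}`, exactly the term that regularizes the limit of
`u w + 2 s H` at `+∞`.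
-/

open MeasureTheory Filter

/-- The regularized integral Ĩ₁(s; c) of the rescaled Painlevé II transcendent w. -/
noncomputable def I1tilde (α : ℝ) (w : ℝ → ℝ) (s c : ℝ) : ℝ :=
  (∫ τ in Set.Ici c, (w τ + Real.sqrt τ + (α + 1 / 4) / τ)) +
    (∫ τ in s..c, w τ) + 2 / 3 * c ^ ((3 : ℝ) / 2) + (α + 1 / 4) * Real.log c

/-- The regularized integral I₂(s; c) of the Hamiltonian H. -/
noncomputable def I2reg (α : ℝ) (H : ℝ → ℝ) (s c : ℝ) : ℝ :=
  (∫ τ in Set.Ici c, (H τ + 2 * α * Real.sqrt τ + α ^ 2 / τ)) +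
    (∫ τ in s..c, H τ) + 4 / 3 * α * c ^ ((3 : ℝ) / 2) + α ^ 2 * Real.log c

/-- The auxiliary regularized integral I₃(s; c) of u·w' + H. -/
noncomputable def I3reg (α : ℝ) (u w H : ℝ → ℝ) (s c : ℝ) : ℝ :=
  (∫ τ in Set.Ici c,
      (u τ * deriv w τ + H τ + 2 * α * Real.sqrt τ + α * (2 * α + 1) / (2 * τ))) +
    (∫ τ in s..c, (u τ * deriv w τ + H τ)) +
    4 / 3 * α * c ^ ((3 : ℝ) / 2) + α * (α + 1 / 2) * Real.log c

theorem integrableOn_Ici_of_abs_le_rpow {f : ℝ → ℝ} {c C p : ℝ} (hc : 0 < c) (hp : p < -1)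
    (hf : ContinuousOn f (Set.Ici c)) (hb : ∀ τ, c ≤ τ → |f τ| ≤ C * τ ^ p) :
    IntegrableOn f (Set.Ici c) := by
  have hmajor : IntegrableOn (fun τ : ℝ => C * τ ^ p) (Set.Ici c) := by
    rw [integrableOn_Ici_iff_integrableOn_Ioi]
    exact (integrableOn_Ioi_rpow_of_lt hp hc).const_mul C
  refine hmajor.mono' (hf.aestronglyMeasurable measurableSet_Ici) ?_
  filter_upwards [ae_restrict_mem measurableSet_Ici] with τ hτ using hb τ hτ

structure IsPainleveIIHamiltonian (α : ℝ) (u w H : ℝ → ℝ) : Prop where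
  hasDerivAt_u : ∀ s, HasDerivAt u (2 * u s * w s + 2 * α) s
  hasDerivAt_w : ∀ s, HasDerivAt w (-(w s ^ 2 - 2 * u s - s)) s
  eq_hamiltonian : ∀ s, H s = -(u s) ^ 2 + (w s ^ 2 - s) * u s + 2 * α * w s

namespace IsPainleveIIHamiltonian

variable {α : ℝ} {u w H : ℝ → ℝ}

theorem continuous_u (h : IsPainleveIIHamiltonian α u w H) : Continuous u :=
  continuous_iff_continuousAt.2 fun s => (h.hasDerivAt_u s).continuousAt

theorem continuous_w (h : IsPainleveIIHamiltonian α u w H) : Continuous w :=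
  continuous_iff_continuousAt.2 fun s => (h.hasDerivAt_w s).continuousAt

theorem deriv_w (h : IsPainleveIIHamiltonian α u w H) :
    deriv w = fun s => -(w s ^ 2 - 2 * u s - s) :=
  funext fun s => (h.hasDerivAt_w s).deriv

theorem continuous_deriv_w (h : IsPainleveIIHamiltonian α u w H) : Continuous (deriv w) := by
  have hu := h.continuous_u
  have hw := h.continuous_w
  rw [h.deriv_w]
  fun_prop

theorem hasDerivAt_H (h : IsPainleveIIHamiltonian α u w H) (s : ℝ) :
    HasDerivAt H (-u s) s := by
  have hu := h.hasDerivAt_u s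
  have hw := h.hasDerivAt_w s
  rw [show H = fun t => -(u t) ^ 2 + (w t ^ 2 - t) * u t + 2 * α * w t from
    funext h.eq_hamiltonian]
  refine (((hu.pow 2).neg.add (((hw.pow 2).sub (hasDerivAt_id s)).mul hu)).add
    (hw.const_mul (2 * α))).congr_deriv ?_
  simp only [id, Pi.sub_apply, Pi.pow_apply]
  ring

theorem continuous_H (h : IsPainleveIIHamiltonian α u w H) : Continuous H :=
  continuous_iff_continuousAt.2 fun s => (h.hasDerivAt_H s).continuousAt

theorem hasDerivAt_mul_add_two_mul_H (h : IsPainleveIIHamiltonian α u w H) (s : ℝ) :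
    HasDerivAt (fun t => u t * w t + 2 * t * H t)
      (3 * (u s * deriv w s) + 6 * H s - 6 * α * w s) s := by
  refine (((h.hasDerivAt_u s).mul (h.hasDerivAt_w s)).add
    (((hasDerivAt_id s).const_mul 2).mul (h.hasDerivAt_H s))).congr_deriv ?_
  rw [h.deriv_w]
  simp only [id]
  linear_combination (-4 : ℝ) * h.eq_hamiltonian s

theorem integral_H_sub_two_mul_w_add (h : IsPainleveIIHamiltonian α u w H) (a b : ℝ) :
    (∫ τ in a..b, H τ) - 2 * α * (∫ τ in a..b, w τ) + (∫ τ in a..b, (u τ * deriv w τ + H τ)) =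
      1 / 3 * ((u b * w b + 2 * b * H b) - (u a * w a + 2 * a * H a)) := by
  have hu := h.continuous_u
  have hw := h.continuous_w
  have hH := h.continuous_H
  have hw' := h.continuous_deriv_w
  have hiH : IntervalIntegrable H volume a b := hH.intervalIntegrable a b
  have hiw : IntervalIntegrable w volume a b := hw.intervalIntegrable a b
  have hiuw' : IntervalIntegrable (fun τ => u τ * deriv w τ + H τ) volume a b :=
    (by fun_prop : Continuous fun τ => u τ * deriv w τ + H τ).intervalIntegrable a b
  have hFTC := intervalIntegral.integral_eq_sub_of_hasDerivAt
    (fun t _ => h.hasDerivAt_mul_add_two_mul_H t)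
    ((by fun_prop : Continuous fun τ => 3 * (u τ * deriv w τ) + 6 * H τ - 6 * α * w τ)
      |>.intervalIntegrable a b)
  have hlin : ∫ τ in a..b, (H τ - 2 * α * w τ + (u τ * deriv w τ + H τ)) =
      (∫ τ in a..b, H τ) - 2 * α * (∫ τ in a..b, w τ) +
        (∫ τ in a..b, (u τ * deriv w τ + H τ)) := by
    rw [intervalIntegral.integral_add (hiH.sub (hiw.const_mul _)) hiuw',
      intervalIntegral.integral_sub hiH (hiw.const_mul _), intervalIntegral.integral_const_mul]
  rw [← hlin, ← hFTC, ← intervalIntegral.integral_const_mul]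
  exact intervalIntegral.integral_congr fun t _ => by ring

theorem hasDerivAt_tail_combination (h : IsPainleveIIHamiltonian α u w H) {τ : ℝ} (hτ : 0 < τ) :
    HasDerivAt (fun t => 1 / 3 * (u t * w t + 2 * t * H t) + 4 / 3 * α * t ^ ((3 : ℝ) / 2))
      ((H τ + 2 * α * Real.sqrt τ + α ^ 2 / τ) - 2 * α * (w τ + Real.sqrt τ + (α + 1 / 4) / τ) +
        (u τ * deriv w τ + H τ + 2 * α * Real.sqrt τ + α * (2 * α + 1) / (2 * τ))) τ := by
  refine ((h.hasDerivAt_mul_add_two_mul_H τ).const_mul (1 / 3 : ℝ) |>.add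
    ((Real.hasDerivAt_rpow_const (p := (3 : ℝ) / 2) (Or.inl hτ.ne')).const_mul
      (4 / 3 * α))).congr_deriv ?_
  rw [show (3 : ℝ) / 2 - 1 = 1 / 2 by norm_num, ← Real.sqrt_eq_rpow]
  field_simp
  ring

theorem integral_Ici_tail_combination (h : IsPainleveIIHamiltonian α u w H) {c : ℝ} (hc : 0 < c)
    (hI₁ : IntegrableOn (fun τ => w τ + Real.sqrt τ + (α + 1 / 4) / τ) (Set.Ici c))
    (hI₂ : IntegrableOn (fun τ => H τ + 2 * α * Real.sqrt τ + α ^ 2 / τ) (Set.Ici c))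
    (hI₃ : IntegrableOn (fun τ =>
      u τ * deriv w τ + H τ + 2 * α * Real.sqrt τ + α * (2 * α + 1) / (2 * τ)) (Set.Ici c))
    (hlim : Tendsto (fun s => u s * w s + 2 * s * H s + 4 * α * s ^ ((3 : ℝ) / 2)) atTop
      (nhds (-α - 2 * α ^ 2))) :
    (∫ τ in Set.Ici c, (H τ + 2 * α * Real.sqrt τ + α ^ 2 / τ)) -
        2 * α * (∫ τ in Set.Ici c, (w τ + Real.sqrt τ + (α + 1 / 4) / τ)) +
        (∫ τ in Set.Ici c,
          (u τ * deriv w τ + H τ + 2 * α * Real.sqrt τ + α * (2 * α + 1) / (2 * τ))) =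
      1 / 3 * (-α - 2 * α ^ 2) -
        (1 / 3 * (u c * w c + 2 * c * H c) + 4 / 3 * α * c ^ ((3 : ℝ) / 2)) := by
  have hGlim : Tendsto (fun t => 1 / 3 * (u t * w t + 2 * t * H t) +
      4 / 3 * α * t ^ ((3 : ℝ) / 2)) atTop (nhds (1 / 3 * (-α - 2 * α ^ 2))) :=
    (hlim.const_mul (1 / 3)).congr fun t => by ring
  rw [← integral_const_mul, ← integral_sub hI₂ (hI₁.const_mul _), ← integral_add _ hI₃,
    integral_Ici_eq_integral_Ioi]
  · exact integral_Ioi_of_hasDerivAt_of_tendsto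
      (h.hasDerivAt_tail_combination hc).continuousAt.continuousWithinAt
      (fun τ hτ => h.hasDerivAt_tail_combination (hc.trans hτ))
      (((hI₂.sub (hI₁.const_mul _)).add hI₃).mono_set Set.Ioi_subset_Ici_self) hGlim
  · exact hI₂.sub (hI₁.const_mul _)

end IsPainleveIIHamiltonian

theorem stmt_15_general (α : ℝ) (u w H : ℝ → ℝ)
    (hu : ∀ s : ℝ, HasDerivAt u (2 * u s * w s + 2 * α) s)
    (hw : ∀ s : ℝ, HasDerivAt w (-(w s ^ 2 - 2 * u s - s)) s)
    (hH : ∀ s : ℝ, H s = -(u s) ^ 2 + (w s ^ 2 - s) * u s + 2 * α * w s)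
    (c : ℝ) (hc : 0 < c) (C : ℝ)
    (hw_asym : ∀ τ : ℝ, c ≤ τ →
      |w τ + Real.sqrt τ + (α + 1 / 4) / τ| ≤ C * τ ^ (-(5 : ℝ) / 2))
    (hH_asym : ∀ τ : ℝ, c ≤ τ →
      |H τ + 2 * α * Real.sqrt τ + α ^ 2 / τ| ≤ C * τ ^ (-(5 : ℝ) / 2))
    (huw_asym : ∀ τ : ℝ, c ≤ τ →
      |u τ * deriv w τ + H τ + 2 * α * Real.sqrt τ + α * (2 * α + 1) / (2 * τ)| ≤
        C * τ ^ (-(5 : ℝ) / 2))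
    (hlim : Tendsto (fun s => u s * w s + 2 * s * H s + 4 * α * s ^ ((3 : ℝ) / 2)) atTop
      (nhds (-α - 2 * α ^ 2))) :
    IntegrableOn (fun τ => w τ + Real.sqrt τ + (α + 1 / 4) / τ) (Set.Ici c) ∧
    IntegrableOn (fun τ => H τ + 2 * α * Real.sqrt τ + α ^ 2 / τ) (Set.Ici c) ∧
    IntegrableOn (fun τ =>
      u τ * deriv w τ + H τ + 2 * α * Real.sqrt τ + α * (2 * α + 1) / (2 * τ)) (Set.Ici c) ∧
    ∀ s : ℝ, I2reg α H s c = -(1 / 3) * (u s * w s + 2 * s * H s + 2 * α ^ 2 + α) +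
      2 * α * I1tilde α w s c - I3reg α u w H s c := by
  have h : IsPainleveIIHamiltonian α u w H := ⟨hu, hw, hH⟩
  have hcu := h.continuous_u
  have hcw := h.continuous_w
  have hcH := h.continuous_H
  have hcw' := h.continuous_deriv_w
  have hI₁ := integrableOn_Ici_of_abs_le_rpow hc (by norm_num)
    (by fun_prop (disch := intro τ hτ; exact (hc.trans_le hτ).ne')) hw_asym
  have hI₂ := integrableOn_Ici_of_abs_le_rpow hc (by norm_num)
    (by fun_prop (disch := intro τ hτ; exact (hc.trans_le hτ).ne')) hH_asym
  have hI₃ := integrableOn_Ici_of_abs_le_rpow hc (by norm_num)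
    (by fun_prop (disch := intro τ hτ; have := hc.trans_le hτ; positivity)) huw_asym
  refine ⟨hI₁, hI₂, hI₃, fun s => ?_⟩
  have htail := h.integral_Ici_tail_combination hc hI₁ hI₂ hI₃ hlim
  have hbulk := h.integral_H_sub_two_mul_w_add s c
  unfold I1tilde I2reg I3reg
  linear_combination htail + hbulk

/-- Identity I₂(s) = -(1/3)(uw + 2sH + 2α² + α) + 2α·Ĩ₁(s) - I₃(s) for the regularized
integrals associated with the tronquée solutions of Painlevé II. -/
theorem stmt_15 (α : ℝ) (u w H : ℝ → ℝ)
    (hu : ∀ s : ℝ, HasDerivAt u (2 * u s * w s + 2 * α) s)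
    (hw : ∀ s : ℝ, HasDerivAt w (-(w s ^ 2 - 2 * u s - s)) s)
    (hH : ∀ s : ℝ, H s = -(u s) ^ 2 + (w s ^ 2 - s) * u s + 2 * α * w s)
    (c : ℝ) (hc : 0 < c) (C : ℝ) (hC : 0 < C)
    (hw_asym : ∀ τ : ℝ, c ≤ τ →
      |w τ + Real.sqrt τ + (α + 1 / 4) / τ| ≤ C * τ ^ (-(5 : ℝ) / 2))
    (hH_asym : ∀ τ : ℝ, c ≤ τ →
      |H τ + 2 * α * Real.sqrt τ + α ^ 2 / τ| ≤ C * τ ^ (-(5 : ℝ) / 2))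
    (huw_asym : ∀ τ : ℝ, c ≤ τ →
      |u τ * deriv w τ + H τ + 2 * α * Real.sqrt τ + α * (2 * α + 1) / (2 * τ)| ≤
        C * τ ^ (-(5 : ℝ) / 2))
    (hlim : Tendsto (fun s => u s * w s + 2 * s * H s + 4 * α * s ^ ((3 : ℝ) / 2)) atTop
      (nhds (-α - 2 * α ^ 2))) :
    IntegrableOn (fun τ => w τ + Real.sqrt τ + (α + 1 / 4) / τ) (Set.Ici c) ∧
    IntegrableOn (fun τ => H τ + 2 * α * Real.sqrt τ + α ^ 2 / τ) (Set.Ici c) ∧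
    IntegrableOn (fun τ =>
      u τ * deriv w τ + H τ + 2 * α * Real.sqrt τ + α * (2 * α + 1) / (2 * τ)) (Set.Ici c) ∧
    ∀ s : ℝ, I2reg α H s c = -(1 / 3) * (u s * w s + 2 * s * H s + 2 * α ^ 2 + α) +
      2 * α * I1tilde α w s c - I3reg α u w H s c :=
  stmt_15_general α u w H hu hw hH c hc C hw_asym hH_asym huw_asym hlim
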